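/- arXiv:1707.09006 — 5 statements merged into one kernel-verified Lean document; each statement's English description precedes it below -/
import Mathlib

section
/- Let A be a commutative Poisson algebra that is an integral domain over a field k of characteristic zero, and let a ∈ A be a nonzero Poisson normal element with associated map λ : A → A satisfying {b, a} = λ(b)·a. Then λ is a derivation of the Lie bracket: λ({b,c}) = {λ(b), c} + {b, λ(c)} for all b, c ∈ A. -/
/-- A Poisson bracket on a commutative `k`-algebra `A`: a `k`-bilinear Lie bracket
satisfying the Leibniz rule. -/
structure IsPoissonBracket (k : Type*) (A : Type*) [CommRing k] [CommRing A] [Algebra k A]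
    (P : A → A → A) : Prop where
  add_left : ∀ a b c : A, P (a + b) c = P a c + P b c
  smul_left : ∀ (r : k) (a b : A), P (r • a) b = r • P a b
  lie_skew : ∀ a b : A, P a b = - P b a
  jacobi : ∀ a b c : A, P a (P b c) + P b (P c a) + P c (P a b) = 0
  leibniz : ∀ a b c : A, P (a * b) c = a * P b c + b * P a c

/-- The weight map of a nonzero Poisson normal element in an integral Poisson algebra
is a derivation of the Lie (Poisson) bracket. -/
theorem weight_map_is_lie_derivation
    {k A : Type*} [Field k] [CharZero k] [CommRing A] [IsDomain A] [Algebra k A]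
    (P : A → A → A) (hP : IsPoissonBracket k A P)
    (a : A) (ha : a ≠ 0) (lam : A → A)
    (hlam : ∀ b : A, P b a = lam b * a) :
    ∀ b c : A, lam (P b c) = P (lam b) c + P b (lam c) := by
  intro b c
  -- Leibniz in the right argument
  have leibR : ∀ x y z : A, P x (y * z) = y * P x z + z * P x y := by
    intro x y z
    rw [hP.lie_skew, hP.leibniz, hP.lie_skew y, hP.lie_skew z]
    ring
  have hJ := hP.jacobi b c a
  have h1 : P b (P c a) = lam c * (lam b * a) + a * P b (lam c) := by
    rw [hlam c, leibR, hlam b]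
  have Pzero : ∀ x : A, P 0 x = 0 := by
    intro x
    have := hP.add_left 0 0 x
    simpa using this.symm
  have Pneg : ∀ x y : A, P (-x) y = - P x y := by
    intro x y
    have := hP.add_left x (-x) y
    simp [Pzero] at this
    linear_combination -this
  have h2 : P c (P a b) = -(lam b * (lam c * a)) + a * P (lam b) c := by
    rw [hP.lie_skew a b, hlam b, hP.lie_skew c, Pneg, hP.leibniz, hP.lie_skew a c, hlam c]
    ring
  have h3 : P a (P b c) = -(lam (P b c) * a) := by
    rw [hP.lie_skew, hlam]
  rw [h1, h2, h3] at hJ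
  have key : a * (P (lam b) c + P b (lam c) - lam (P b c)) = 0 := by linear_combination hJ
  rcases mul_eq_zero.mp key with h | h
  · exact absurd h ha
  · linear_combination -h
end

section
/- Let g be a Lie algebra over a field k of characteristic zero and equip the symmetric algebra S(g) with its natural Poisson bracket (the unique Poisson bracket extending the Lie bracket on g). Then an element f ∈ S(g) is a semi-invariant (i.e. {x, f} ∈ k·f for all x ∈ g) if and only if f is Poisson normal (i.e. {S(g), f} ⊆ S(g)·f). -/
namespace IsPoissonBracket

variable {k A : Type*} [CommRing k] [CommRing A] [Algebra k A] {P : A → A → A}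

theorem add_right (hP : IsPoissonBracket k A P) (a b c : A) :
    P a (b + c) = P a b + P a c := by
  rw [hP.lie_skew, hP.add_left, neg_add, ← hP.lie_skew, ← hP.lie_skew]

theorem algebraMap_left (hP : IsPoissonBracket k A P) (r : k) (a : A) :
    P (algebraMap k A r) a = 0 := by
  have hone : P 1 a = 0 := by simpa using hP.leibniz 1 1 a
  rw [Algebra.algebraMap_eq_smul_one, hP.smul_left, hone, smul_zero]

def ad (hP : IsPoissonBracket k A P) (a : A) : A →+ A :=
  AddMonoidHom.mk' (P a) (hP.add_right a)

@[simp]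
theorem ad_apply (hP : IsPoissonBracket k A P) (a b : A) : hP.ad a b = P a b := rfl

def normalizer (hP : IsPoissonBracket k A P) (f : A) : Subalgebra k A where
  carrier := {a | ∃ c, P a f = c * f}
  mul_mem' := by
    rintro a b ⟨c, hc⟩ ⟨d, hd⟩
    exact ⟨a * d + b * c, by rw [hP.leibniz, hc, hd]; ring⟩
  add_mem' := by
    rintro a b ⟨c, hc⟩ ⟨d, hd⟩
    exact ⟨c + d, by rw [hP.add_left, hc, hd, add_mul]⟩
  algebraMap_mem' r := ⟨0, by rw [hP.algebraMap_left, zero_mul]⟩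

end IsPoissonBracket

namespace DirectSum

section Decomposition

variable {ι M σ : Type*} [DecidableEq ι] [AddCommMonoid M] [SetLike σ M]
  [AddSubmonoidClass σ M] (ℳ : ι → σ) [Decomposition ℳ]

theorem map_decompose_of_forall_mem {φ : M →+ M} (hφ : ∀ i, ∀ x ∈ ℳ i, φ x ∈ ℳ i)
    (x : M) (i : ι) : φ (decompose ℳ x i) = decompose ℳ (φ x) i := by
  classical
  conv_rhs => rw [← sum_support_decompose ℳ x]
  rw [map_sum, decompose_sum, DFinsupp.finsetSum_apply, AddSubmonoidClass.coe_finsetSum,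
    Finset.sum_eq_single i]
  · exact (decompose_of_mem_same ℳ (hφ i _ (decompose ℳ x i).2)).symm
  · exact fun j _ hji => decompose_of_mem_ne ℳ (hφ j _ (decompose ℳ x j).2) hji
  · intro hi
    rw [DFinsupp.notMem_support_iff.mp hi, ZeroMemClass.coe_zero, map_zero, decompose_zero,
      zero_apply, ZeroMemClass.coe_zero]

end Decomposition

section NatGraded

variable {A σ : Type*} [Semiring A] [SetLike σ A] [AddSubmonoidClass σ A]
  (𝒜 : ℕ → σ) [GradedRing 𝒜]

theorem exists_decompose_ne_zero_forall_lt {a : A} (ha : a ≠ 0) :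
    ∃ n, decompose 𝒜 a n ≠ 0 ∧ ∀ i, n < i → decompose 𝒜 a i = 0 := by
  classical
  have hsupp : (decompose 𝒜 a).support.Nonempty := by
    rw [Finset.nonempty_iff_ne_empty, Ne, DFinsupp.support_eq_empty, ← decompose_zero,
      (decompose 𝒜).injective.eq_iff]
    exact ha
  refine ⟨_, DFinsupp.mem_support_iff.mp (Finset.max'_mem _ hsupp), fun i hi => ?_⟩
  by_contra hne
  exact hi.not_ge (Finset.le_max' _ i (DFinsupp.mem_support_iff.mpr hne))

theorem mem_zero_of_forall_pos {a : A} (ha : ∀ i, 0 < i → decompose 𝒜 a i = 0) :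
    a ∈ 𝒜 0 := by
  classical
  rw [← sum_support_decompose 𝒜 a]
  refine sum_mem fun i hi => ?_
  obtain rfl : i = 0 := by
    by_contra hi0
    exact DFinsupp.mem_support_iff.mp hi (ha i (Nat.pos_of_ne_zero hi0))
  exact (decompose 𝒜 a 0).2

theorem coe_decompose_mul_add_of_forall_lt {a b : A} {m n : ℕ}
    (ha : ∀ i, m < i → decompose 𝒜 a i = 0) (hb : ∀ j, n < j → decompose 𝒜 b j = 0) :
    (decompose 𝒜 (a * b) (m + n) : A) = decompose 𝒜 a m * decompose 𝒜 b n := by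
  classical
  rw [decompose_mul, coe_mul_apply, Finset.sum_eq_single (m, n)]
  · rintro ⟨i, j⟩ hij hne
    simp only [Finset.mem_filter, Finset.mem_product, DFinsupp.mem_support_iff] at hij
    obtain ⟨⟨hai, hbj⟩, hsum⟩ := hij
    have him : i ≤ m := not_lt.mp fun h => hai (ha i h)
    have hjn : j ≤ n := not_lt.mp fun h => hbj (hb j h)
    exact absurd (Prod.ext (by omega) (by omega : j = n)) hne
  · intro hmn
    simp only [Finset.mem_filter, Finset.mem_product, DFinsupp.mem_support_iff, not_and_or,
      not_not, and_true] at hmn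
    rcases hmn with ham | hbn
    · rw [ham, ZeroMemClass.coe_zero, zero_mul]
    · rw [hbn, ZeroMemClass.coe_zero, mul_zero]

theorem mem_zero_of_decompose_mul_eq_zero [NoZeroDivisors A] {c f : A} {n : ℕ}
    (hfn : decompose 𝒜 f n ≠ 0) (hf : ∀ i, n < i → decompose 𝒜 f i = 0)
    (hcf : ∀ i, n < i → decompose 𝒜 (c * f) i = 0) : c ∈ 𝒜 0 := by
  rcases eq_or_ne c 0 with rfl | hc
  · exact zero_mem _
  obtain ⟨d, hcd, hc_top⟩ := exists_decompose_ne_zero_forall_lt 𝒜 hc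
  obtain rfl : d = 0 := by
    by_contra hd
    have htop := coe_decompose_mul_add_of_forall_lt 𝒜 hc_top hf
    rw [hcf (d + n) (by omega), ZeroMemClass.coe_zero] at htop
    exact mul_ne_zero ((ZeroMemClass.coe_eq_zero).not.mpr hcd)
      ((ZeroMemClass.coe_eq_zero).not.mpr hfn) htop.symm
  exact mem_zero_of_forall_pos 𝒜 hc_top

theorem mem_zero_of_map_eq_mul [NoZeroDivisors A] {φ : A →+ A}
    (hφ : ∀ i, ∀ x ∈ 𝒜 i, φ x ∈ 𝒜 i) {c f : A} (hf : f ≠ 0) (h : φ f = c * f) : c ∈ 𝒜 0 := by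
  obtain ⟨n, hfn, hf_top⟩ := exists_decompose_ne_zero_forall_lt 𝒜 hf
  refine mem_zero_of_decompose_mul_eq_zero 𝒜 hfn hf_top fun i hi => ?_
  rw [← h, ← Subtype.coe_inj, ← map_decompose_of_forall_mem 𝒜 hφ, hf_top i hi,
    ZeroMemClass.coe_zero, map_zero]

end NatGraded

end DirectSum

theorem semiInvariant_iff_poissonNormal_general
    {k : Type*} [Field k]
    {g : Type*} [LieRing g] [LieAlgebra k g]
    {A : Type*} [CommRing A] [IsDomain A] [Algebra k A]
    (P : A → A → A) (hP : IsPoissonBracket k A P)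
    (ι : g →ₗ[k] A)
    (hgen : Algebra.adjoin k (Set.range ι) = ⊤)
    (𝒜 : ℕ → Submodule k A) (hinternal : DirectSum.IsInternal 𝒜)
    (hone : (1 : A) ∈ 𝒜 0)
    (h0 : ∀ a ∈ 𝒜 0, ∃ r : k, a = algebraMap k A r)
    (hmul : ∀ i j : ℕ, ∀ a ∈ 𝒜 i, ∀ b ∈ 𝒜 j, a * b ∈ 𝒜 (i + j))
    (hg1 : ∀ x : g, ι x ∈ 𝒜 1)
    (hgrade : ∀ i j : ℕ, ∀ a ∈ 𝒜 i, ∀ b ∈ 𝒜 j, P a b ∈ 𝒜 (i + j - 1))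
    (f : A) :
    (∀ x : g, ∃ r : k, P (ι x) f = algebraMap k A r * f) ↔
      (∀ a : A, ∃ c : A, P a f = c * f) := by
  constructor
  · intro h a
    have hle : Algebra.adjoin k (Set.range ι) ≤ hP.normalizer f := by
      refine Algebra.adjoin_le ?_
      rintro _ ⟨x, rfl⟩
      obtain ⟨r, hr⟩ := h x
      exact ⟨algebraMap k A r, hr⟩
    exact hle (hgen ▸ Algebra.mem_top)
  · intro h x
    obtain ⟨c, hc⟩ := h (ι x)
    rcases eq_or_ne f 0 with rfl | hf
    · exact ⟨0, by simpa using (hP.ad (ι x)).map_zero⟩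
    let _ : SetLike.GradedMonoid 𝒜 :=
      { one_mem := hone, mul_mem := fun _ _ _ _ ha hb => hmul _ _ _ ha _ hb }
    let _ : GradedRing 𝒜 := { hinternal.chooseDecomposition with }
    have hdeg : ∀ i, ∀ a ∈ 𝒜 i, hP.ad (ι x) a ∈ 𝒜 i := fun i a ha => by
      simpa using hgrade 1 i _ (hg1 x) a ha
    obtain ⟨r, rfl⟩ := h0 c (DirectSum.mem_zero_of_map_eq_mul 𝒜 hdeg hf hc)
    exact ⟨r, hc⟩

/-- In the symmetric algebra of a Lie algebra (modelled abstractly: an integral domain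
`A` generated by the image of `g`, with a grading placing `g` in degree 1 such that the
Poisson bracket drops degree by one), an element is a semi-invariant if and only if it
is Poisson normal. -/
theorem semiInvariant_iff_poissonNormal
    {k : Type*} [Field k] [CharZero k]
    {g : Type*} [LieRing g] [LieAlgebra k g]
    {A : Type*} [CommRing A] [IsDomain A] [Algebra k A]
    (P : A → A → A) (hP : IsPoissonBracket k A P)
    (ι : g →ₗ[k] A) (hinj : Function.Injective ι)
    (hbr : ∀ x y : g, P (ι x) (ι y) = ι ⁅x, y⁆)
    (hgen : Algebra.adjoin k (Set.range ι) = ⊤)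
    (𝒜 : ℕ → Submodule k A) (hinternal : DirectSum.IsInternal 𝒜)
    (hone : (1 : A) ∈ 𝒜 0)
    (h0 : ∀ a ∈ 𝒜 0, ∃ r : k, a = algebraMap k A r)
    (hmul : ∀ i j : ℕ, ∀ a ∈ 𝒜 i, ∀ b ∈ 𝒜 j, a * b ∈ 𝒜 (i + j))
    (hg1 : ∀ x : g, ι x ∈ 𝒜 1)
    (hgrade : ∀ i j : ℕ, ∀ a ∈ 𝒜 i, ∀ b ∈ 𝒜 j, P a b ∈ 𝒜 (i + j - 1))
    (f : A) :
    (∀ x : g, ∃ r : k, P (ι x) f = algebraMap k A r * f) ↔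
      (∀ a : A, ∃ c : A, P a f = c * f) :=
  semiInvariant_iff_poissonNormal_general P hP ι hgen 𝒜 hinternal hone h0 hmul hg1 hgrade f
end

section
/- Let A be an integral Poisson algebra over a field k of characteristic zero and let λ, μ be weights with nonzero weight spaces A_λ and A_μ (λ, μ derivations of A with {c,a} = λ(c)a for a ∈ A_λ, etc.). If {A_λ, A_μ} ⊆ A_{λ+μ} and A is an integral domain, and there exist nonzero x ∈ A_λ, y ∈ A_μ with xy ≠ 0, then [μ, λ](a)·xy = 0 for all a ∈ A, hence [λ, μ] = 0. -/
/-- Converse direction of the abelian weight property: if the bracket of the weight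
spaces `A_λ` and `A_μ` lands in `A_{λ+μ}`, then `[μ,λ](a)·xy = 0` for all `a`, and hence
the weight derivations commute. -/
theorem commute_of_bracket_graded
    {k A : Type*} [Field k] [CharZero k] [CommRing A] [IsDomain A] [Algebra k A]
    (P : A → A → A) (hP : IsPoissonBracket k A P)
    (lam mu : A → A) (x y : A) (hx0 : x ≠ 0) (hy0 : y ≠ 0) (hxy0 : x * y ≠ 0)
    (hx : ∀ c : A, P c x = lam c * x) (hy : ∀ c : A, P c y = mu c * y)
    (hsub : ∀ a : A, (∀ c : A, P c a = lam c * a) → ∀ b : A, (∀ c : A, P c b = mu c * b) →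
      ∀ c : A, P c (P a b) = (lam c + mu c) * P a b) :
    (∀ a : A, (mu (lam a) - lam (mu a)) * (x * y) = 0) ∧
      ∀ a : A, lam (mu a) = mu (lam a) := by
  have hzero : ∀ c : A, P 0 c = 0 := by
    intro c
    have h := hP.add_left 0 0 c
    simp only [add_zero] at h
    linear_combination -h
  have hneg : ∀ b c : A, P (-b) c = - P b c := by
    intro b c
    have h := hP.add_left b (-b) c
    rw [add_neg_cancel, hzero] at h
    linear_combination -h
  have key : ∀ a : A, lam (mu a) = mu (lam a) := by
    intro a
    have j := hP.jacobi a x y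
    have e1 : P a (P x y) = (lam a + mu a) * P x y := hsub x hx y hy a
    have e2 : P x (P y a) = -(mu a * P x y) + lam (mu a) * (x * y) := by
      have h1 : P y a = -(mu a * y) := by rw [hP.lie_skew, hy]
      rw [h1, hP.lie_skew x, hneg, hP.leibniz, hP.lie_skew y x, hx (mu a)]
      ring
    have e3 : P y (P a x) = -(lam a * P x y) - mu (lam a) * (x * y) := by
      rw [hx, hP.lie_skew y, hP.leibniz, hy (lam a)]
      ring
    have hmain : (lam (mu a) - mu (lam a)) * (x * y) = 0 := by
      linear_combination j - e1 - e2 - e3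
    rcases mul_eq_zero.mp hmain with h | h
    · exact sub_eq_zero.mp h
    · exact absurd h hxy0
  refine ⟨fun a => ?_, key⟩
  rw [← key a, sub_self, zero_mul]
end

section
/- Let A be a generalised Poisson affine space over a field k of characteristic zero and let I be a prime Poisson ideal of A. Then A/I is a generalised Poisson affine space: it is an integral Poisson algebra generated by the images of those normal generators not in I, these images are Poisson normal, their weight derivations are induced from those of A (in particular each λ_i preserves I), and they pairwise commute. -/
/-- The quotient of a generalised Poisson affine space by a prime Poisson ideal is again
a generalised Poisson affine space: the bracket descends, the images of the generators
not in `I` generate, they are Poisson normal with weight derivations induced from those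
of `A` (in particular each such `λ_i` preserves `I`), and the induced weights commute. -/
theorem quotient_generalised_poisson_affine_space
    {k A : Type*} [Field k] [CharZero k] [CommRing A] [IsDomain A] [Algebra k A]
    (P : A → A → A) (hP : IsPoissonBracket k A P)
    (n : ℕ) (x : Fin n → A) (l : Fin n → A → A)
    (hgen : Algebra.adjoin k (Set.range x) = ⊤)
    (hx : ∀ (i : Fin n) (b : A), P b (x i) = l i b * x i)
    (hxne : ∀ i : Fin n, x i ≠ 0)
    (hcomm : ∀ (i j : Fin n) (a : A), l i (l j a) = l j (l i a))
    (I : Ideal A) [I.IsPrime] (hIP : ∀ a ∈ I, ∀ b : A, P b a ∈ I) :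
    (∀ i : Fin n, x i ∉ I → ∀ a ∈ I, l i a ∈ I) ∧
    ∃ Q : (A ⧸ I) → (A ⧸ I) → (A ⧸ I),
      IsPoissonBracket k (A ⧸ I) Q ∧
      (∀ a b : A, Q (Ideal.Quotient.mk I a) (Ideal.Quotient.mk I b) =
        Ideal.Quotient.mk I (P a b)) ∧
      Algebra.adjoin k {y : A ⧸ I | ∃ i : Fin n, x i ∉ I ∧ y = Ideal.Quotient.mk I (x i)} = ⊤ ∧
      (∀ i : Fin n, x i ∉ I → ∀ b : A,
        Q (Ideal.Quotient.mk I b) (Ideal.Quotient.mk I (x i)) =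
          Ideal.Quotient.mk I (l i b) * Ideal.Quotient.mk I (x i)) ∧
      (∀ i j : Fin n, x i ∉ I → x j ∉ I → ∀ a : A,
        Ideal.Quotient.mk I (l i (l j a)) = Ideal.Quotient.mk I (l j (l i a))) := by
  -- bilinearity consequences
  have add_right : ∀ a b c : A, P a (b + c) = P a b + P a c := by
    intro a b c
    rw [hP.lie_skew, hP.add_left, neg_add, ← hP.lie_skew, ← hP.lie_skew]
  have sub_left : ∀ a b c : A, P (a - b) c = P a c - P b c := by
    intro a b c
    have h := hP.add_left (a - b) b c
    rw [sub_add_cancel] at h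
    linear_combination -h
  -- λ_i preserves I when x i ∉ I
  have hpres : ∀ i : Fin n, x i ∉ I → ∀ a ∈ I, l i a ∈ I := by
    intro i hxi a ha
    have h1 : P a (x i) ∈ I := by
      rw [hP.lie_skew]
      exact I.neg_mem (hIP a ha (x i))
    rw [hx i a] at h1
    rcases Ideal.IsPrime.mem_or_mem ‹I.IsPrime› h1 with h | h
    · exact h
    · exact absurd h hxi
  refine ⟨hpres, ?_⟩
  -- well-definedness of the descended bracket
  have hwd : ∀ a b a' b' : A, a - a' ∈ I → b - b' ∈ I →
      Ideal.Quotient.mk I (P a b) = Ideal.Quotient.mk I (P a' b') := by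
    intro a b a' b' ha hb
    rw [Ideal.Quotient.eq]
    have h1 : P (a - a') b ∈ I := by
      rw [hP.lie_skew]
      exact I.neg_mem (hIP _ ha b)
    have h2 : P a' (b - b') ∈ I := hIP _ hb a'
    have key : P a b - P a' b' = P (a - a') b + P a' (b - b') := by
      linear_combination -sub_left a a' b - hP.lie_skew a' (b - b') + sub_left b b' a'
        + hP.lie_skew b a' - hP.lie_skew b' a'
    rw [key]
    exact I.add_mem h1 h2
  -- define the descended bracket
  set Q : (A ⧸ I) → (A ⧸ I) → (A ⧸ I) :=
    fun y z => Quotient.liftOn₂' y z (fun a b => Ideal.Quotient.mk I (P a b))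
      (fun a b a' b' ha hb => by
        apply hwd
        · exact (Submodule.quotientRel_def I).1 ha
        · exact (Submodule.quotientRel_def I).1 hb) with hQdef
  have hQmk : ∀ a b : A, Q (Ideal.Quotient.mk I a) (Ideal.Quotient.mk I b) =
      Ideal.Quotient.mk I (P a b) := fun a b => rfl
  have hsurj := Ideal.Quotient.mk_surjective (I := I)
  have hsmul : ∀ (r : k) (a : A), Ideal.Quotient.mk I (r • a) = r • Ideal.Quotient.mk I a := by
    intro r a
    rw [← Ideal.Quotient.mkₐ_eq_mk k I]
    exact map_smul _ r a
  refine ⟨Q, ⟨?_, ?_, ?_, ?_, ?_⟩, hQmk, ?_, ?_, ?_⟩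
  · intro a b c
    obtain ⟨a, rfl⟩ := hsurj a; obtain ⟨b, rfl⟩ := hsurj b; obtain ⟨c, rfl⟩ := hsurj c
    rw [← map_add, hQmk, hQmk, hQmk, ← map_add, hP.add_left]
  · intro r a b
    obtain ⟨a, rfl⟩ := hsurj a; obtain ⟨b, rfl⟩ := hsurj b
    rw [← hsmul, hQmk, hQmk, hP.smul_left, hsmul]
  · intro a b
    obtain ⟨a, rfl⟩ := hsurj a; obtain ⟨b, rfl⟩ := hsurj b
    rw [hQmk, hQmk, hP.lie_skew, map_neg]
  · intro a b c
    obtain ⟨a, rfl⟩ := hsurj a; obtain ⟨b, rfl⟩ := hsurj b; obtain ⟨c, rfl⟩ := hsurj c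
    rw [hQmk, hQmk, hQmk, hQmk, hQmk, hQmk, ← map_add, ← map_add, hP.jacobi, map_zero]
  · intro a b c
    obtain ⟨a, rfl⟩ := hsurj a; obtain ⟨b, rfl⟩ := hsurj b; obtain ⟨c, rfl⟩ := hsurj c
    rw [← map_mul, hQmk, hQmk, hQmk, hP.leibniz, map_add, map_mul, map_mul]
  · -- generation
    have h1 : Algebra.adjoin k ((Ideal.Quotient.mkₐ k I) '' Set.range x) = ⊤ := by
      rw [← AlgHom.map_adjoin, hgen, Algebra.map_top]
      exact (AlgHom.range_eq_top _).2 (Ideal.Quotient.mkₐ_surjective k I)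
    rw [eq_top_iff, ← h1]
    apply Algebra.adjoin_le
    rintro y ⟨a, ⟨i, rfl⟩, rfl⟩
    by_cases hxi : x i ∈ I
    · have : (Ideal.Quotient.mkₐ k I) (x i) = 0 := by
        simpa [Ideal.Quotient.mkₐ_eq_mk] using (Ideal.Quotient.eq_zero_iff_mem).2 hxi
      rw [this]
      exact Subalgebra.zero_mem _
    · exact Algebra.subset_adjoin ⟨i, hxi, by simp [Ideal.Quotient.mkₐ_eq_mk]⟩
  · intro i _ b
    rw [hQmk, hx i b, map_mul]
  · intro i j _ _ a
    rw [hcomm i j a]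
end

section
/- Let A be a generalised Poisson affine space over a field k of characteristic zero such that Cas(Frac(A)) is a finite (algebraic) extension of k. Then for every weight λ, any two elements a, b ∈ A_λ are algebraically dependent over k: there exists a nonzero polynomial f ∈ k[X,Y] with f(a,b) = 0. -/
/-- In a generalised Poisson affine space whose rational Casimirs are algebraic over
`k`, any two elements of the same weight space `A_λ` (for `λ` in the weight monoid) are
algebraically dependent over `k`. -/
theorem same_weight_elements_algebraically_dependent
    {k A K : Type*} [Field k] [CharZero k] [CommRing A] [IsDomain A] [Algebra k A]
    [Field K] [Algebra A K] [IsFractionRing A K] [Algebra k K] [IsScalarTower k A K]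
    (P : A → A → A) (hP : IsPoissonBracket k A P)
    (n : ℕ) (x : Fin n → A) (l : Fin n → A → A)
    (hgen : Algebra.adjoin k (Set.range x) = ⊤)
    (hx : ∀ (i : Fin n) (b : A), P b (x i) = l i b * x i)
    (hxne : ∀ i : Fin n, x i ≠ 0)
    (hcomm : ∀ (i j : Fin n) (a : A), l i (l j a) = l j (l i a))
    (Q : K → K → K) (hQ : IsPoissonBracket k K Q)
    (hext : ∀ a b : A, Q (algebraMap A K a) (algebraMap A K b) = algebraMap A K (P a b))
    (hfin : ∀ q : K, (∀ c : K, Q c q = 0) → IsAlgebraic k q)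
    (cf : Fin n → ℕ) (a b : A)
    (ha : ∀ d : A, P d a = (∑ i : Fin n, cf i • l i d) * a)
    (hb : ∀ d : A, P d b = (∑ i : Fin n, cf i • l i d) * b) :
    ∃ p : MvPolynomial (Fin 2) k, p ≠ 0 ∧ MvPolynomial.aeval ![a, b] p = 0 := by
  classical
  by_cases ha0 : a = 0
  · exact ⟨MvPolynomial.X 0, MvPolynomial.X_ne_zero 0, by simp [ha0]⟩
  set f : A →+* K := algebraMap A K with hfdef
  have finj : Function.Injective f := IsFractionRing.injective A K
  have hfa : f a ≠ 0 := fun h => ha0 (finj (by simpa using h))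
  -- basic Poisson bracket identities in K
  have hone : ∀ c : K, Q 1 c = 0 := by
    intro c
    have h := hQ.leibniz 1 1 c
    simp only [one_mul] at h
    linear_combination -h
  have hone' : ∀ c : K, Q c 1 = 0 := by
    intro c; rw [hQ.lie_skew, hone, neg_zero]
  have hlr : ∀ u v w : K, Q u (v * w) = v * Q u w + w * Q u v := by
    intro u v w
    rw [hQ.lie_skew u (v * w), hQ.leibniz, hQ.lie_skew w u, hQ.lie_skew v u]
    ring
  have hinvR : ∀ d c : K, c ≠ 0 → Q d c⁻¹ = -(c⁻¹ * c⁻¹ * Q d c) := by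
    intro d c hc
    have h1 : Q d (c * c⁻¹) = 0 := by rw [mul_inv_cancel₀ hc]; exact hone' d
    rw [hlr] at h1
    generalize hXe : Q d c⁻¹ = X at h1 ⊢
    field_simp at h1 ⊢
    linear_combination h1
  set q : K := f b / f a with hqdef
  -- q is a rational Casimir
  have hQq : ∀ d : A, Q (f d) q = 0 := by
    intro d
    have hda : Q (f d) (f a) = f (∑ i : Fin n, cf i • l i d) * f a := by
      rw [hext d a, ha d, map_mul]
    have hdb : Q (f d) (f b) = f (∑ i : Fin n, cf i • l i d) * f b := by
      rw [hext d b, hb d, map_mul]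
    rw [hqdef, div_eq_mul_inv, hlr, hinvR _ _ hfa, hda, hdb]
    field_simp
    ring
  have hQall : ∀ c : K, Q c q = 0 := by
    intro c
    obtain ⟨u, v, hv, rfl⟩ := IsFractionRing.div_surjective (A := A) c
    have hfv : f v ≠ 0 := fun h =>
      nonZeroDivisors.ne_zero hv (finj (by simpa using h))
    have hvinv : Q (f v)⁻¹ q = 0 := by
      have h := hinvR q ((f v) : K) hfv
      rw [hQ.lie_skew ((f v)⁻¹) q, h, hQ.lie_skew q (f v), hQq v]
      simp
    rw [div_eq_mul_inv, hQ.leibniz, hQq u, hvinv]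
    ring
  obtain ⟨p0, hp0, hp0q⟩ := hfin q hQall
  set N := p0.natDegree with hN
  set p : MvPolynomial (Fin 2) k :=
    ∑ i ∈ Finset.range (N + 1),
      MvPolynomial.C (p0.coeff i) * MvPolynomial.X 1 ^ i * MvPolynomial.X 0 ^ (N - i)
    with hpdef
  have hpev : MvPolynomial.aeval ![(1 : Polynomial k), Polynomial.X] p = p0 := by
    rw [hpdef, map_sum]
    conv_rhs => rw [p0.as_sum_range_C_mul_X_pow]
    refine Finset.sum_congr rfl fun i _ => ?_
    simp only [map_mul, map_pow, MvPolynomial.aeval_X, MvPolynomial.aeval_C,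
      Matrix.cons_val_one, Matrix.head_cons, Matrix.cons_val_zero, one_pow, mul_one,
      Polynomial.algebraMap_eq]
  have hpne : p ≠ 0 := by
    intro h
    apply hp0
    rw [← hpev, h, map_zero]
  refine ⟨p, hpne, ?_⟩
  -- evaluate in K
  have key : f (MvPolynomial.aeval ![a, b] p) = 0 := by
    have hmap : f (MvPolynomial.aeval ![a, b] p) = MvPolynomial.aeval ![f a, f b] p := by
      rw [hpdef]
      rw [map_sum (MvPolynomial.aeval ![a, b]), map_sum f,
        map_sum (MvPolynomial.aeval ![f a, f b])]
      refine Finset.sum_congr rfl fun i _ => ?_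
      simp only [map_mul, map_pow, MvPolynomial.aeval_X, MvPolynomial.aeval_C,
        Matrix.cons_val_one, Matrix.head_cons, Matrix.cons_val_zero]
      rw [← IsScalarTower.algebraMap_apply k A K]
    have hq0 : ∑ i ∈ Finset.range (N + 1),
        algebraMap k K (p0.coeff i) * q ^ i = 0 := by
      have := hp0q
      rw [Polynomial.aeval_def] at this
      conv_lhs at this => rw [p0.as_sum_range_C_mul_X_pow]
      rw [Polynomial.eval₂_finset_sum] at this
      simpa [Polynomial.eval₂_mul, Polynomial.eval₂_C, Polynomial.eval₂_X_pow] using this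
    have hterm : ∀ i ∈ Finset.range (N + 1),
        algebraMap k K (p0.coeff i) * (f b) ^ i * (f a) ^ (N - i)
          = (f a) ^ N * (algebraMap k K (p0.coeff i) * q ^ i) := by
      intro i hi
      have hiN : i ≤ N := Nat.lt_succ_iff.mp (Finset.mem_range.mp hi)
      rw [hqdef, div_pow, pow_sub₀ (f a) hfa hiN]
      field_simp
    rw [hmap]
    rw [hpdef, map_sum]
    calc (∑ i ∈ Finset.range (N + 1), MvPolynomial.aeval ![f a, f b]
            (MvPolynomial.C (p0.coeff i) * MvPolynomial.X 1 ^ i * MvPolynomial.X 0 ^ (N - i)))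
        = ∑ i ∈ Finset.range (N + 1),
            algebraMap k K (p0.coeff i) * (f b) ^ i * (f a) ^ (N - i) := by
          refine Finset.sum_congr rfl fun i _ => ?_
          simp [MvPolynomial.aeval_X]
      _ = ∑ i ∈ Finset.range (N + 1),
            (f a) ^ N * (algebraMap k K (p0.coeff i) * q ^ i) :=
          Finset.sum_congr rfl hterm
      _ = (f a) ^ N * ∑ i ∈ Finset.range (N + 1),
            algebraMap k K (p0.coeff i) * q ^ i := by rw [Finset.mul_sum]
      _ = 0 := by rw [hq0, mul_zero]
  have : f (MvPolynomial.aeval ![a, b] p) = f 0 := by simpa using key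
  exact finj this
end
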